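/- arXiv:1704.07598 — 2 statements merged into one kernel-verified Lean document; each statement's English description precedes it below -/
import Mathlib

section
/- Let X be a geodesic metric space, e ∈ X, N a Morse gauge, and x, y ∈ X points such that the geodesics [e,x] and [e,y] are N-Morse. Then any geodesic triangle with vertices e, x, y is 4·N(3,0)-slim. -/
/-!
Let `p = γ₂ t₀` be a point of `[x, y]` closest to `e` and `η` a geodesic from `e` to `p`.
Because `p` is a closest point, following `η` and then `[p, x]` (resp. `[p, y]`) is a
`(3, 0)`-quasi-geodesic, so the Morse property puts it in the `N(3,0)`-neighbourhood of `[e, x]`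
(resp. `[e, y]`). Conversely, by the intermediate value theorem applied to the distance from `e`,
`[e, x]` lies in the `2N(3,0)`-neighbourhood of that path. As `η` is `N(3,0)`-close to `[e, y]`
and `[p, x] ⊆ [x, y]`, every side lies in the `3N(3,0)`-neighbourhood of the other two.
-/

open Metric Set

/-- A `(λ, ε)`-quasi-geodesic defined on the interval `[a,b]`. -/
def IsQuasiGeodesicOn {X : Type*} [MetricSpace X] (lam eps a b : ℝ) (σ : ℝ → X) : Prop :=
  ∀ s ∈ Set.Icc a b, ∀ t ∈ Set.Icc a b,
    (1 / lam) * |s - t| - eps ≤ dist (σ s) (σ t) ∧ dist (σ s) (σ t) ≤ lam * |s - t| + eps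

/-- A geodesic segment from `x` to `y`, parametrized by arclength on `[0, dist x y]`. -/
def IsGeodesicSegment {X : Type*} [MetricSpace X] (γ : ℝ → X) (x y : X) : Prop :=
  γ 0 = x ∧ γ (dist x y) = y ∧
    ∀ s ∈ Set.Icc (0:ℝ) (dist x y), ∀ t ∈ Set.Icc (0:ℝ) (dist x y),
      dist (γ s) (γ t) = |s - t|

/-- A geodesic metric space: any two points are joined by a geodesic segment. -/
def GeodesicSpace (X : Type*) [MetricSpace X] : Prop :=
  ∀ x y : X, ∃ γ : ℝ → X, IsGeodesicSegment γ x y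

/-- A geodesic ray, parametrized by arclength on `[0, ∞)`. -/
def IsGeodesicRay {X : Type*} [MetricSpace X] (γ : ℝ → X) : Prop :=
  ∀ s ∈ Set.Ici (0:ℝ), ∀ t ∈ Set.Ici (0:ℝ), dist (γ s) (γ t) = |s - t|

/-- A set `im` (the image of a geodesic) is `N`-Morse for a Morse gauge `N : ℝ → ℝ → ℝ` if
every `(λ,ε)`-quasi-geodesic (`λ ≥ 1`, `ε ≥ 0`) with endpoints on `im` stays in the
`N λ ε`-neighborhood of `im`. -/
def IsMorseWith {X : Type*} [MetricSpace X] (N : ℝ → ℝ → ℝ) (im : Set X) : Prop :=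
  ∀ lam eps : ℝ, 1 ≤ lam → 0 ≤ eps → ∀ a b : ℝ, a ≤ b → ∀ σ : ℝ → X,
    IsQuasiGeodesicOn lam eps a b σ → σ a ∈ im → σ b ∈ im →
    ∀ t ∈ Set.Icc a b, Metric.infDist (σ t) im ≤ N lam eps

/-- An `N`-Morse geodesic ray. -/
def IsMorseRay {X : Type*} [MetricSpace X] (N : ℝ → ℝ → ℝ) (γ : ℝ → X) : Prop :=
  IsGeodesicRay γ ∧ IsMorseWith N (γ '' Set.Ici 0)

/-- An `N`-Morse geodesic segment from `x` to `y`. -/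
def IsMorseSegment {X : Type*} [MetricSpace X] (N : ℝ → ℝ → ℝ) (γ : ℝ → X) (x y : X) : Prop :=
  IsGeodesicSegment γ x y ∧ IsMorseWith N (γ '' Set.Icc 0 (dist x y))

/-- A geodesic triangle with vertices `x, y, z` and sides `γ₁ : x→y`, `γ₂ : y→z`, `γ₃ : z→x`
is `δ`-slim if each side lies in the `δ`-neighborhood of the union of the other two sides. -/
def TriangleIsSlim {X : Type*} [MetricSpace X] (δ : ℝ) (x y z : X) (γ₁ γ₂ γ₃ : ℝ → X) : Prop :=
  (∀ s ∈ Set.Icc (0:ℝ) (dist x y),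
    Metric.infDist (γ₁ s) (γ₂ '' Set.Icc 0 (dist y z) ∪ γ₃ '' Set.Icc 0 (dist z x)) ≤ δ) ∧
  (∀ s ∈ Set.Icc (0:ℝ) (dist y z),
    Metric.infDist (γ₂ s) (γ₁ '' Set.Icc 0 (dist x y) ∪ γ₃ '' Set.Icc 0 (dist z x)) ≤ δ) ∧
  (∀ s ∈ Set.Icc (0:ℝ) (dist z x),
    Metric.infDist (γ₃ s) (γ₁ '' Set.Icc 0 (dist x y) ∪ γ₂ '' Set.Icc 0 (dist y z)) ≤ δ)

noncomputable def concatAt {α : Type*} (B : ℝ) (η β : ℝ → α) (r : ℝ) : α :=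
  if r ≤ B then η r else β (r - B)

section

variable {α : Type*} {B r : ℝ} {η β : ℝ → α}

theorem concatAt_of_le (h : r ≤ B) : concatAt B η β r = η r := if_pos h

theorem concatAt_of_ge (hηβ : η B = β 0) (h : B ≤ r) : concatAt B η β r = β (r - B) := by
  rcases h.lt_or_eq with h | rfl
  · exact if_neg (not_le.2 h)
  · rw [concatAt_of_le le_rfl, hηβ, sub_self]

theorem image_concatAt {C : ℝ} (hB : 0 ≤ B) (hC : 0 ≤ C) (hηβ : η B = β 0) :
    concatAt B η β '' Icc 0 (B + C) = η '' Icc 0 B ∪ β '' Icc 0 C := by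
  rw [← Icc_union_Icc_eq_Icc hB (le_add_of_nonneg_right hC), image_union]
  congr 1
  · exact image_congr fun r hr => concatAt_of_le hr.2
  · rw [image_congr fun r hr => concatAt_of_ge hηβ hr.1, ← image_image β (· - B),
      image_sub_const_Icc, sub_self, add_sub_cancel_left]

end

section

variable {X : Type*} [MetricSpace X]

theorem Metric.mem_cthickening_of_infDist_le {x : X} {E : Set X} {δ : ℝ} (hE : E.Nonempty)
    (h : infDist x E ≤ δ) : x ∈ cthickening δ E := by
  rw [mem_cthickening_iff, ← ENNReal.ofReal_toReal (infEDist_ne_top hE)]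
  exact ENNReal.ofReal_le_ofReal h

theorem Metric.infDist_le_of_mem_cthickening {x : X} {E : Set X} {δ : ℝ} (hδ : 0 ≤ δ)
    (h : x ∈ cthickening δ E) : infDist x E ≤ δ :=
  ENNReal.toReal_le_of_le_ofReal hδ (mem_cthickening_iff.1 h)

namespace IsGeodesicSegment

variable {γ : ℝ → X} {x y : X}

theorem dist_left (hγ : IsGeodesicSegment γ x y) {s : ℝ} (hs : s ∈ Icc 0 (dist x y)) :
    dist x (γ s) = s := by
  rw [← hγ.1, hγ.2.2 0 ⟨le_rfl, dist_nonneg⟩ s hs, zero_sub, abs_neg, abs_of_nonneg hs.1]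

theorem dist_right (hγ : IsGeodesicSegment γ x y) {s : ℝ} (hs : s ∈ Icc 0 (dist x y)) :
    dist (γ s) y = dist x y - s := by
  conv_lhs => rw [← hγ.2.1]
  rw [hγ.2.2 s hs _ ⟨dist_nonneg, le_rfl⟩, abs_sub_comm, abs_of_nonneg (sub_nonneg.2 hs.2)]

theorem lipschitzOnWith (hγ : IsGeodesicSegment γ x y) :
    LipschitzOnWith 1 γ (Icc 0 (dist x y)) :=
  LipschitzOnWith.of_dist_le_mul fun s hs t ht => by
    rw [hγ.2.2 s hs t ht, NNReal.coe_one, one_mul, Real.dist_eq]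

theorem isCompact_image (hγ : IsGeodesicSegment γ x y) : IsCompact (γ '' Icc 0 (dist x y)) :=
  isCompact_Icc.image_of_continuousOn hγ.lipschitzOnWith.continuousOn

theorem left_mem_image (hγ : IsGeodesicSegment γ x y) : x ∈ γ '' Icc 0 (dist x y) :=
  ⟨0, ⟨le_rfl, dist_nonneg⟩, hγ.1⟩

theorem right_mem_image (hγ : IsGeodesicSegment γ x y) : y ∈ γ '' Icc 0 (dist x y) :=
  ⟨dist x y, ⟨dist_nonneg, le_rfl⟩, hγ.2.1⟩

theorem comp_const_sub (hγ : IsGeodesicSegment γ x y) {t₀ : ℝ} (ht₀ : t₀ ∈ Icc 0 (dist x y)) :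
    IsGeodesicSegment (fun u => γ (t₀ - u)) (γ t₀) x := by
  have hd : dist (γ t₀) x = t₀ := by rw [dist_comm, hγ.dist_left ht₀]
  refine ⟨by simp only [sub_zero], by simp only [hd, sub_self, hγ.1], fun u hu v hv => ?_⟩
  rw [hd] at hu hv
  rw [hγ.2.2 _ ⟨by linarith [hu.2], by linarith [hu.1, ht₀.2]⟩ _
    ⟨by linarith [hv.2], by linarith [hv.1, ht₀.2]⟩, sub_sub_sub_cancel_left, abs_sub_comm]

theorem comp_const_add (hγ : IsGeodesicSegment γ x y) {t₀ : ℝ} (ht₀ : t₀ ∈ Icc 0 (dist x y)) :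
    IsGeodesicSegment (fun u => γ (t₀ + u)) (γ t₀) y := by
  have hd : dist (γ t₀) y = dist x y - t₀ := hγ.dist_right ht₀
  refine ⟨by simp only [add_zero], by simp only [hd, add_sub_cancel, hγ.2.1], fun u hu v hv => ?_⟩
  rw [hd] at hu hv
  rw [hγ.2.2 _ ⟨by linarith [hu.1, ht₀.1], by linarith [hu.2]⟩ _
    ⟨by linarith [hv.1, ht₀.1], by linarith [hv.2]⟩, add_sub_add_left_eq_sub]

theorem image_comp_const_sub (hγ : IsGeodesicSegment γ x y) {t₀ : ℝ} (ht₀ : t₀ ∈ Icc 0 (dist x y)) :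
    (fun u => γ (t₀ - u)) '' Icc 0 (dist (γ t₀) x) = γ '' Icc 0 t₀ := by
  rw [dist_comm, hγ.dist_left ht₀, ← image_image γ (fun u => t₀ - u), image_const_sub_Icc,
    sub_self, sub_zero]

theorem image_comp_const_add (hγ : IsGeodesicSegment γ x y) {t₀ : ℝ} (ht₀ : t₀ ∈ Icc 0 (dist x y)) :
    (fun u => γ (t₀ + u)) '' Icc 0 (dist (γ t₀) y) = γ '' Icc t₀ (dist x y) := by
  rw [hγ.dist_right ht₀, ← image_image γ (fun u => t₀ + u), image_const_add_Icc, add_zero,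
    add_sub_cancel]

theorem reverse (hγ : IsGeodesicSegment γ x y) :
    IsGeodesicSegment (fun u => γ (dist x y - u)) y x := by
  simpa only [hγ.2.1] using hγ.comp_const_sub ⟨dist_nonneg, le_rfl⟩

theorem image_reverse (hγ : IsGeodesicSegment γ x y) :
    (fun u => γ (dist x y - u)) '' Icc 0 (dist y x) = γ '' Icc 0 (dist x y) := by
  simpa only [hγ.2.1] using hγ.image_comp_const_sub ⟨dist_nonneg, le_rfl⟩

end IsGeodesicSegment

theorem Metric.subset_cthickening_trans {A S T : Set X} {δ ε : ℝ} (hδ : 0 ≤ δ) (hε : 0 ≤ ε)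
    (hAS : A ⊆ cthickening δ S) (hST : S ⊆ cthickening ε T) : A ⊆ cthickening (δ + ε) T :=
  hAS.trans ((cthickening_subset_of_subset δ hST).trans (cthickening_cthickening_subset hδ hε T))

theorem dist_add_dist_le_three_mul_dist {e p q r : X} (hq : dist e q + dist q p = dist e p)
    (hr : dist e p ≤ dist e r) : dist q p + dist p r ≤ 3 * dist q r := by
  have h₁ := dist_triangle e q r
  have h₂ := dist_triangle p q r
  rw [dist_comm p q] at h₂
  linarith

theorem isQuasiGeodesicOn_of_le {lam a b : ℝ} {σ : ℝ → X} (hlam : 1 ≤ lam)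
    (h : ∀ s ∈ Icc a b, ∀ t ∈ Icc a b, s ≤ t →
      t - s ≤ lam * dist (σ s) (σ t) ∧ dist (σ s) (σ t) ≤ t - s) :
    IsQuasiGeodesicOn lam 0 a b σ := by
  have h_le : ∀ s ∈ Icc a b, ∀ t ∈ Icc a b, s ≤ t →
      1 / lam * |s - t| - 0 ≤ dist (σ s) (σ t) ∧ dist (σ s) (σ t) ≤ lam * |s - t| + 0 := by
    intro s hs t ht hst
    obtain ⟨hlower, hupper⟩ := h s hs t ht hst
    rw [abs_sub_comm, abs_of_nonneg (sub_nonneg.2 hst), sub_zero, add_zero, one_div,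
      inv_mul_le_iff₀ (by linarith)]
    exact ⟨hlower, hupper.trans (le_mul_of_one_le_left (sub_nonneg.2 hst) hlam)⟩
  intro s hs t ht
  rcases le_total s t with hst | hts
  · exact h_le s hs t ht hst
  · rw [dist_comm, abs_sub_comm]
    exact h_le t ht s hs hts

theorem IsQuasiGeodesicOn.continuousOn {lam a b : ℝ} {σ : ℝ → X}
    (h : IsQuasiGeodesicOn lam 0 a b σ) : ContinuousOn σ (Icc a b) :=
  (LipschitzOnWith.of_dist_le' fun s hs t ht => by
    simpa only [add_zero, Real.dist_eq] using (h s hs t ht).2).continuousOn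

namespace IsMorseWith

variable {N : ℝ → ℝ → ℝ} {im : Set X}

theorem nonneg (hM : IsMorseWith N im) (him : im.Nonempty) {lam eps : ℝ} (hlam : 1 ≤ lam)
    (heps : 0 ≤ eps) : 0 ≤ N lam eps := by
  obtain ⟨w, hw⟩ := him
  have hconst : IsQuasiGeodesicOn lam eps 0 0 (fun _ => w) := by
    rintro s ⟨hs₀, hs₁⟩ t ⟨ht₀, ht₁⟩
    rw [le_antisymm hs₁ hs₀, le_antisymm ht₁ ht₀, sub_zero, abs_zero, mul_zero, dist_self]
    constructor <;> linarith
  exact infDist_nonneg.trans (hM lam eps hlam heps 0 0 le_rfl _ hconst hw hw 0 ⟨le_rfl, le_rfl⟩)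

theorem image_subset_cthickening (hM : IsMorseWith N im) {lam eps a b : ℝ} {σ : ℝ → X}
    (hlam : 1 ≤ lam) (heps : 0 ≤ eps) (hab : a ≤ b) (hσ : IsQuasiGeodesicOn lam eps a b σ)
    (ha : σ a ∈ im) (hb : σ b ∈ im) : σ '' Icc a b ⊆ cthickening (N lam eps) im := by
  rintro _ ⟨t, ht, rfl⟩
  exact mem_cthickening_of_infDist_le ⟨_, ha⟩ (hM lam eps hlam heps a b hab σ hσ ha hb t ht)

end IsMorseWith

theorem IsGeodesicSegment.image_subset_cthickening_of_path {g σ : ℝ → X} {e z : X} {L K : ℝ}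
    (hg : IsGeodesicSegment g e z) (hK : 0 ≤ K) (hL : 0 ≤ L) (hσ : ContinuousOn σ (Icc 0 L))
    (hσ0 : σ 0 = e) (hσL : σ L = z)
    (hnear : σ '' Icc 0 L ⊆ cthickening K (g '' Icc 0 (dist e z))) :
    g '' Icc 0 (dist e z) ⊆ cthickening (2 * K) (σ '' Icc 0 L) := by
  rintro _ ⟨s, hs, rfl⟩
  obtain ⟨t, ht, hts⟩ : ∃ t ∈ Icc 0 L, dist e (σ t) = s := by
    have hf : ContinuousOn (fun t => dist e (σ t)) (Icc 0 L) :=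
      (continuous_const.dist continuous_id).comp_continuousOn hσ
    refine intermediate_value_Icc hL hf ?_
    rwa [hσ0, hσL, dist_self]
  obtain ⟨_, ⟨u, hu, rfl⟩, htu⟩ : ∃ q ∈ g '' Icc 0 (dist e z), dist (σ t) q ≤ K := by
    have := hnear ⟨t, ht, rfl⟩
    rw [hg.isCompact_image.cthickening_eq_biUnion_closedBall hK, mem_iUnion₂] at this
    simpa only [mem_closedBall, exists_prop] using this
  have hsu : |s - u| ≤ K := by
    rw [← hts, ← hg.dist_left hu]
    simpa only [dist_comm e] using (abs_dist_sub_le (σ t) (g u) e).trans htu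
  refine mem_cthickening_of_dist_le _ (σ t) _ _ ⟨t, ht, rfl⟩ ?_
  calc dist (g s) (σ t) ≤ dist (g s) (g u) + dist (g u) (σ t) := dist_triangle _ _ _
    _ ≤ K + K := add_le_add (by rwa [hg.2.2 s hs u hu]) (by rwa [dist_comm])
    _ = 2 * K := by ring

theorem isQuasiGeodesicOn_concatAt {e p z : X} {η β : ℝ → X} (hη : IsGeodesicSegment η e p)
    (hβ : IsGeodesicSegment β p z) (hp : ∀ w ∈ β '' Icc 0 (dist p z), dist e p ≤ dist e w) :
    IsQuasiGeodesicOn 3 0 0 (dist e p + dist p z) (concatAt (dist e p) η β) := by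
  have hηβ : η (dist e p) = β 0 := hη.2.1.trans hβ.1.symm
  refine isQuasiGeodesicOn_of_le (by norm_num) fun s hs t ht hst => ?_
  rcases le_total t (dist e p) with htB | hBt
  · have hsB := hst.trans htB
    rw [concatAt_of_le hsB, concatAt_of_le htB, hη.2.2 s ⟨hs.1, hsB⟩ t ⟨ht.1, htB⟩, abs_sub_comm,
      abs_of_nonneg (sub_nonneg.2 hst)]
    constructor <;> linarith
  have hu : t - dist e p ∈ Icc 0 (dist p z) := ⟨sub_nonneg.2 hBt, by linarith [ht.2]⟩
  rw [concatAt_of_ge hηβ hBt]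
  rcases le_total s (dist e p) with hsB | hBs
  · have hs' : s ∈ Icc 0 (dist e p) := ⟨hs.1, hsB⟩
    have hsp := hη.dist_right hs'
    have hpu := hβ.dist_left hu
    have hfar := dist_add_dist_le_three_mul_dist (by rw [hη.dist_left hs', hsp]; ring)
      (hp _ (mem_image_of_mem β hu))
    have hnear := dist_triangle (η s) p (β (t - dist e p))
    rw [concatAt_of_le hsB]
    rw [hsp, hpu] at hfar hnear
    constructor <;> linarith
  · rw [concatAt_of_ge hηβ hBs, hβ.2.2 _ ⟨sub_nonneg.2 hBs, by linarith [hs.2]⟩ _ hu,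
      sub_sub_sub_cancel_right, abs_sub_comm, abs_of_nonneg (sub_nonneg.2 hst)]
    constructor <;> linarith

theorem IsMorseWith.fellowTravels_concatAt {N : ℝ → ℝ → ℝ} {e p z : X} {η β g : ℝ → X}
    (hη : IsGeodesicSegment η e p) (hβ : IsGeodesicSegment β p z)
    (hp : ∀ w ∈ β '' Icc 0 (dist p z), dist e p ≤ dist e w) (hg : IsGeodesicSegment g e z)
    (hM : IsMorseWith N (g '' Icc 0 (dist e z))) :
    η '' Icc 0 (dist e p) ∪ β '' Icc 0 (dist p z) ⊆ cthickening (N 3 0) (g '' Icc 0 (dist e z)) ∧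
    g '' Icc 0 (dist e z) ⊆
      cthickening (2 * N 3 0) (η '' Icc 0 (dist e p) ∪ β '' Icc 0 (dist p z)) := by
  have hηβ : η (dist e p) = β 0 := hη.2.1.trans hβ.1.symm
  have hq := isQuasiGeodesicOn_concatAt hη hβ hp
  have hstart : concatAt (dist e p) η β 0 = e := (concatAt_of_le dist_nonneg).trans hη.1
  have hend : concatAt (dist e p) η β (dist e p + dist p z) = z := by
    rw [concatAt_of_ge hηβ (le_add_of_nonneg_right dist_nonneg), add_sub_cancel_left, hβ.2.1]
  have hnear := hM.image_subset_cthickening (by norm_num) le_rfl (by positivity) hq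
    (by rw [hstart]; exact hg.left_mem_image) (by rw [hend]; exact hg.right_mem_image)
  rw [← image_concatAt dist_nonneg dist_nonneg hηβ]
  exact ⟨hnear, hg.image_subset_cthickening_of_path
    (hM.nonneg ⟨e, hg.left_mem_image⟩ (by norm_num) le_rfl) (by positivity) hq.continuousOn
    hstart hend hnear⟩

theorem triangleIsSlim_of_subset_cthickening {δ : ℝ} (hδ : 0 ≤ δ) {x y z : X}
    {γ₁ γ₂ γ₃ : ℝ → X}
    (h₁ : γ₁ '' Icc 0 (dist x y) ⊆
      cthickening δ (γ₂ '' Icc 0 (dist y z) ∪ γ₃ '' Icc 0 (dist z x)))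
    (h₂ : γ₂ '' Icc 0 (dist y z) ⊆
      cthickening δ (γ₁ '' Icc 0 (dist x y) ∪ γ₃ '' Icc 0 (dist z x)))
    (h₃ : γ₃ '' Icc 0 (dist z x) ⊆
      cthickening δ (γ₁ '' Icc 0 (dist x y) ∪ γ₂ '' Icc 0 (dist y z))) :
    TriangleIsSlim δ x y z γ₁ γ₂ γ₃ :=
  ⟨fun _ hs => infDist_le_of_mem_cthickening hδ (h₁ (mem_image_of_mem γ₁ hs)),
    fun _ hs => infDist_le_of_mem_cthickening hδ (h₂ (mem_image_of_mem γ₂ hs)),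
    fun _ hs => infDist_le_of_mem_cthickening hδ (h₃ (mem_image_of_mem γ₃ hs))⟩

theorem TriangleIsSlim.mono {δ δ' : ℝ} {x y z : X} {γ₁ γ₂ γ₃ : ℝ → X}
    (h : TriangleIsSlim δ x y z γ₁ γ₂ γ₃) (hδ : δ ≤ δ') : TriangleIsSlim δ' x y z γ₁ γ₂ γ₃ :=
  ⟨fun s hs => (h.1 s hs).trans hδ, fun s hs => (h.2.1 s hs).trans hδ,
    fun s hs => (h.2.2 s hs).trans hδ⟩

/-- The sides are `A, B, C`, the side `B = P ∪ Q` is split at a point `p`, and `H` is a path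
from the vertex opposite to `B` to `p`. -/
theorem tripod_sides_subset_cthickening {A B C H P Q : Set X} {δ : ℝ} (hδ : 0 ≤ δ)
    (hB : B = P ∪ Q) (hHP : H ∪ P ⊆ cthickening δ A) (hA : A ⊆ cthickening (2 * δ) (H ∪ P))
    (hHQ : H ∪ Q ⊆ cthickening δ C) (hC : C ⊆ cthickening (2 * δ) (H ∪ Q)) :
    A ⊆ cthickening (3 * δ) (B ∪ C) ∧ B ⊆ cthickening (3 * δ) (A ∪ C) ∧
      C ⊆ cthickening (3 * δ) (A ∪ B) := by
  have h3 : 2 * δ + δ = 3 * δ := by ring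
  refine ⟨?_, ?_, ?_⟩
  · refine h3 ▸ subset_cthickening_trans (by positivity) hδ hA (union_subset ?_ ?_)
    · exact (subset_union_left.trans hHQ).trans (cthickening_subset_of_subset _ subset_union_right)
    · exact (hB ▸ subset_union_left).trans (subset_union_left.trans (self_subset_cthickening _))
  · rw [hB, cthickening_union]
    exact union_subset_union
      ((subset_union_right.trans hHP).trans (cthickening_mono (by linarith) _))
      ((subset_union_right.trans hHQ).trans (cthickening_mono (by linarith) _))
  · refine h3 ▸ subset_cthickening_trans (by positivity) hδ hC (union_subset ?_ ?_)
    · exact (subset_union_left.trans hHP).trans (cthickening_subset_of_subset _ subset_union_left)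
    · exact (hB ▸ subset_union_right).trans (subset_union_right.trans (self_subset_cthickening _))

end

/-- If geodesics `[e,x]` and `[e,y]` are `N`-Morse, then any geodesic triangle with
vertices `e, x, y` is `4·N(3,0)`-slim.  Here the triangle has sides `γ₁ : e→x`,
`γ₂ : x→y`, `γ₃ : y→e`, where `γ₁` and (the reverse of) `γ₃` are `N`-Morse geodesics. -/
theorem slim_triangle_of_two_morse_sides {X : Type*} [MetricSpace X]
    (hX : GeodesicSpace X) (N : ℝ → ℝ → ℝ) (e x y : X) (γ₁ γ₂ γ₃ : ℝ → X)
    (h₁ : IsMorseSegment N γ₁ e x)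
    (h₂ : IsGeodesicSegment γ₂ x y)
    (h₃ : IsGeodesicSegment γ₃ y e)
    (h₃M : IsMorseWith N (γ₃ '' Set.Icc 0 (dist y e))) :
    TriangleIsSlim (4 * N 3 0) e x y γ₁ γ₂ γ₃ := by
  obtain ⟨hγ₁, h₁M⟩ := h₁
  obtain ⟨_, ⟨t₀, ht₀, rfl⟩, hp⟩ :=
    h₂.isCompact_image.exists_infDist_eq_dist ⟨x, h₂.left_mem_image⟩ e
  have hPx : γ₂ '' Icc 0 t₀ ⊆ γ₂ '' Icc 0 (dist x y) := image_mono (Icc_subset_Icc le_rfl ht₀.2)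
  have hPy : γ₂ '' Icc t₀ (dist x y) ⊆ γ₂ '' Icc 0 (dist x y) :=
    image_mono (Icc_subset_Icc ht₀.1 le_rfl)
  have hclosest : ∀ S ⊆ γ₂ '' Icc 0 (dist x y), ∀ w ∈ S, dist e (γ₂ t₀) ≤ dist e w :=
    fun S hS w hw => hp ▸ infDist_le_dist_of_mem (hS hw)
  obtain ⟨η, hη⟩ := hX e (γ₂ t₀)
  obtain ⟨hx, hA⟩ := h₁M.fellowTravels_concatAt hη (h₂.comp_const_sub ht₀)
    (hclosest _ ((h₂.image_comp_const_sub ht₀).trans_subset hPx)) hγ₁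
  obtain ⟨hy, hC⟩ := (h₃.image_reverse ▸ h₃M).fellowTravels_concatAt hη (h₂.comp_const_add ht₀)
    (hclosest _ ((h₂.image_comp_const_add ht₀).trans_subset hPy)) h₃.reverse
  rw [h₂.image_comp_const_sub ht₀] at hx hA
  rw [h₂.image_comp_const_add ht₀, h₃.image_reverse] at hy hC
  have hN : 0 ≤ N 3 0 := h₃M.nonneg ⟨e, h₃.right_mem_image⟩ (by norm_num) le_rfl
  have hsplit : γ₂ '' Icc 0 (dist x y) = γ₂ '' Icc 0 t₀ ∪ γ₂ '' Icc t₀ (dist x y) := by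
    rw [← image_union, Icc_union_Icc_eq_Icc ht₀.1 ht₀.2]
  obtain ⟨h₁slim, h₂slim, h₃slim⟩ := tripod_sides_subset_cthickening hN hsplit hx hA hy hC
  exact (triangleIsSlim_of_subset_cthickening (by positivity) h₁slim h₂slim h₃slim).mono
    (by linarith)
end

section
/- Let X be a geodesic metric space and let σ : [a,b] → X be a (λ,ε)-quasi-geodesic. Then there exists a continuous (λ, ε')-quasi-geodesic σ' : [a,b] → X with ε' = 2(λ+ε) such that: σ'(a) = σ(a), σ'(b) = σ(b); the length of σ' restricted to any subinterval [s,t] is at most k₁·d(σ'(s),σ'(t)) + k₂ where k₁ = λ(λ+ε) and k₂ = (λε'+3)(λ+ε); and the Hausdorff distance between the images of σ and σ' is at most λ+ε. -/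
open Metric Set

/-!
Sample `σ` on the grid `a + kδ` of mesh `δ = (b - a) / ⌈b - a⌉₊ ≤ 1` and join consecutive samples
by geodesic segments traversed at constant speed. Each segment has length at most `λδ + ε`, so
the resulting path is `(λ + ε/δ)`-Lipschitz, which bounds its variation. Every point of it lies
within `(λ + ε)/2` of a sample whose parameter is at most `1/2` away, and this transfers the
quasi-geodesic inequalities of `σ` to the new path and bounds the Hausdorff distance.
-/

open scoped NNReal

theorem LipschitzOnWith.Icc_union_Icc {X : Type*} [PseudoMetricSpace X] {f : ℝ → X} {K : ℝ≥0}
    {a b c : ℝ} (h₁ : LipschitzOnWith K f (Icc a b)) (h₂ : LipschitzOnWith K f (Icc b c)) :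
    LipschitzOnWith K f (Icc a c) := by
  refine LipschitzOnWith.of_dist_le_mul fun s hs t ht => ?_
  wlog hst : s ≤ t generalizing s t
  · rw [dist_comm, dist_comm s]
    exact this t ht s hs (le_of_not_ge hst)
  rcases le_total t b with htb | hbt
  · exact h₁.dist_le_mul s ⟨hs.1, hst.trans htb⟩ t ⟨ht.1, htb⟩
  rcases le_total b s with hbs | hsb
  · exact h₂.dist_le_mul s ⟨hbs, hs.2⟩ t ⟨hbt, ht.2⟩
  calc dist (f s) (f t) ≤ dist (f s) (f b) + dist (f b) (f t) := dist_triangle _ _ _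
    _ ≤ K * dist s b + K * dist b t :=
      add_le_add (h₁.dist_le_mul s ⟨hs.1, hsb⟩ b ⟨hs.1.trans hsb, le_rfl⟩)
        (h₂.dist_le_mul b ⟨le_rfl, hbt.trans ht.2⟩ t ⟨hbt, ht.2⟩)
    _ = K * dist s t := by
      simp only [Real.dist_eq, abs_of_nonpos (sub_nonpos.2 hsb), abs_of_nonpos (sub_nonpos.2 hbt),
        abs_of_nonpos (sub_nonpos.2 hst)]
      ring

theorem LipschitzOnWith.eVariationOn_comp_div_le {X : Type*} [PseudoMetricSpace X] {F : ℝ → X}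
    {K : ℝ≥0} {S : Set ℝ} (hF : LipschitzOnWith K F S) {a δ s t : ℝ} (hδ : 0 < δ)
    (hmaps : MapsTo (fun u => (u - a) / δ) (Icc s t) S) :
    eVariationOn (F ∘ fun u => (u - a) / δ) (Icc s t) ≤ ENNReal.ofReal (K * ((t - s) / δ)) := by
  have hmono : Monotone fun u => (u - a) / δ := fun u v huv =>
    div_le_div_of_nonneg_right (by linarith) hδ.le
  calc eVariationOn (F ∘ fun u => (u - a) / δ) (Icc s t)
      ≤ K * eVariationOn (fun u => (u - a) / δ) (Icc s t) := hF.comp_eVariationOn_le hmaps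
    _ = ENNReal.ofReal (K * ((t - s) / δ)) := by
      rw [← univ_inter (Icc s t), (hmono.monotoneOn univ).eVariationOn_eq trivial trivial,
        ENNReal.ofReal_mul K.coe_nonneg, ENNReal.ofReal_coe_nnreal, ← sub_div,
        sub_sub_sub_cancel_right]

theorem div_div_natCeil_le_add_one {c r : ℝ} (hc : 0 < c) (hr : 0 ≤ r) (hrc : r ≤ c) :
    r / (c / ⌈c⌉₊) ≤ r + 1 := by
  rw [div_div_eq_mul_div, div_le_iff₀ hc]
  nlinarith [Nat.ceil_lt_add_one hc.le]

section GeodesicInterpolation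

variable {X : Type*} [MetricSpace X] {γ : X → X → ℝ → X} (x : ℕ → X)

noncomputable def geodesicPiece (γ : X → X → ℝ → X) (x : ℕ → X) (i : ℕ) (u : ℝ) : X :=
  γ (x i) (x (i + 1)) ((u - i) * dist (x i) (x (i + 1)))

noncomputable def segmentIndex (N : ℕ) (u : ℝ) : ℕ := min ⌊u⌋₊ (N - 1)

/-- The piecewise geodesic path through `x 0, …, x N`, following `geodesicPiece γ x i` on
`[i, i + 1]`; outside `[0, N]` it evaluates the first or the last piece. -/
noncomputable def geodesicInterpolation (γ : X → X → ℝ → X) (x : ℕ → X) (N : ℕ) (u : ℝ) : X :=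
  geodesicPiece γ x (segmentIndex N u) u

theorem dist_geodesicPiece (hγ : ∀ y z, IsGeodesicSegment (γ y z) y z) {i : ℕ} {u v : ℝ}
    (hu : u ∈ Icc (i : ℝ) (i + 1)) (hv : v ∈ Icc (i : ℝ) (i + 1)) :
    dist (geodesicPiece γ x i u) (geodesicPiece γ x i v) = |u - v| * dist (x i) (x (i + 1)) := by
  have hmem : ∀ w ∈ Icc (i : ℝ) (i + 1),
      (w - i) * dist (x i) (x (i + 1)) ∈ Icc 0 (dist (x i) (x (i + 1))) := fun w hw =>
    ⟨mul_nonneg (by linarith [hw.1]) dist_nonneg,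
      mul_le_of_le_one_left dist_nonneg (by linarith [hw.2])⟩
  rw [geodesicPiece, geodesicPiece, (hγ _ _).2.2 _ (hmem u hu) _ (hmem v hv), ← sub_mul,
    sub_sub_sub_cancel_right, abs_mul, abs_of_nonneg dist_nonneg]

theorem geodesicPiece_natCast (hγ : ∀ y z, IsGeodesicSegment (γ y z) y z) (i : ℕ) :
    geodesicPiece γ x i i = x i := by
  simp [geodesicPiece, (hγ _ _).1]

theorem geodesicPiece_natCast_add_one (hγ : ∀ y z, IsGeodesicSegment (γ y z) y z) (i : ℕ) :
    geodesicPiece γ x i (i + 1) = x (i + 1) := by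
  simp [geodesicPiece, (hγ _ _).2.1]

theorem segmentIndex_lt {N : ℕ} (hN : 0 < N) (u : ℝ) : segmentIndex N u < N := by
  unfold segmentIndex
  omega

theorem mem_Icc_segmentIndex {N : ℕ} (hN : 0 < N) {u : ℝ} (hu : u ∈ Icc 0 (N : ℝ)) :
    u ∈ Icc (segmentIndex N u : ℝ) (segmentIndex N u + 1) := by
  refine ⟨(Nat.cast_le.2 (min_le_left _ _)).trans (Nat.floor_le hu.1), ?_⟩
  rcases le_total ⌊u⌋₊ (N - 1) with h | h
  · rw [segmentIndex, min_eq_left h]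
    exact (Nat.lt_floor_add_one u).le
  · rw [segmentIndex, min_eq_right h, Nat.cast_sub hN, Nat.cast_one, sub_add_cancel]
    exact hu.2

theorem geodesicInterpolation_eq_geodesicPiece (hγ : ∀ y z, IsGeodesicSegment (γ y z) y z)
    {N i : ℕ} (hi : i < N) {u : ℝ} (hu : u ∈ Icc (i : ℝ) (i + 1)) :
    geodesicInterpolation γ x N u = geodesicPiece γ x i u := by
  rcases hu.2.eq_or_lt with rfl | hlt
  · have hfloor : ⌊(i : ℝ) + 1⌋₊ = i + 1 := by exact_mod_cast Nat.floor_natCast (i + 1)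
    rw [geodesicInterpolation, segmentIndex, hfloor, geodesicPiece_natCast_add_one x hγ]
    rcases le_or_gt (i + 1) (N - 1) with h | h
    · rw [min_eq_left h]
      exact_mod_cast geodesicPiece_natCast x hγ (i + 1)
    · rw [min_eq_right h.le, show N - 1 = i by omega, geodesicPiece_natCast_add_one x hγ]
  · have hfloor : ⌊u⌋₊ = i := (Nat.floor_eq_iff (by linarith [hu.1])).2 ⟨hu.1, hlt⟩
    rw [geodesicInterpolation, segmentIndex, hfloor, min_eq_left (by omega)]

theorem geodesicInterpolation_natCast (hγ : ∀ y z, IsGeodesicSegment (γ y z) y z)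
    {N k : ℕ} (hk : k ≤ N) : geodesicInterpolation γ x N k = x k := by
  cases k with
  | zero => simp [geodesicInterpolation, segmentIndex, geodesicPiece, (hγ _ _).1]
  | succ j =>
    push_cast
    rw [geodesicInterpolation_eq_geodesicPiece x hγ hk ⟨by linarith, le_rfl⟩,
      geodesicPiece_natCast_add_one x hγ]

theorem dist_geodesicInterpolation (hγ : ∀ y z, IsGeodesicSegment (γ y z) y z)
    {N i : ℕ} (hi : i < N) {u v : ℝ} (hu : u ∈ Icc (i : ℝ) (i + 1))
    (hv : v ∈ Icc (i : ℝ) (i + 1)) :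
    dist (geodesicInterpolation γ x N u) (geodesicInterpolation γ x N v) =
      |u - v| * dist (x i) (x (i + 1)) := by
  rw [geodesicInterpolation_eq_geodesicPiece x hγ hi hu,
    geodesicInterpolation_eq_geodesicPiece x hγ hi hv, dist_geodesicPiece x hγ hu hv]

theorem exists_dist_geodesicInterpolation_le (hγ : ∀ y z, IsGeodesicSegment (γ y z) y z)
    {N : ℕ} (hN : 0 < N) {L : ℝ} (hL : ∀ i < N, dist (x i) (x (i + 1)) ≤ L) {u : ℝ}
    (hu : u ∈ Icc 0 (N : ℝ)) :
    ∃ j ≤ N, |u - j| ≤ 1 / 2 ∧ dist (geodesicInterpolation γ x N u) (x j) ≤ L / 2 := by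
  set i := segmentIndex N u
  have hi : i < N := segmentIndex_lt hN u
  have hui := mem_Icc_segmentIndex hN hu
  have hdi := hL i hi
  rcases le_total (u - i) (1 / 2) with h | h
  · refine ⟨i, hi.le, by rw [abs_le]; constructor <;> linarith [hui.1], ?_⟩
    rw [← geodesicInterpolation_natCast x hγ hi.le,
      dist_geodesicInterpolation x hγ hi hui ⟨le_rfl, by linarith⟩,
      abs_of_nonneg (by linarith [hui.1])]
    nlinarith [dist_nonneg (x := x i) (y := x (i + 1))]
  · refine ⟨i + 1, hi, by push_cast; rw [abs_le]; constructor <;> linarith [hui.2], ?_⟩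
    rw [← geodesicInterpolation_natCast x hγ hi]
    push_cast
    rw [dist_geodesicInterpolation x hγ hi hui ⟨by linarith, le_rfl⟩,
      abs_of_nonpos (by linarith [hui.2])]
    nlinarith [dist_nonneg (x := x i) (y := x (i + 1))]

theorem lipschitzOnWith_geodesicInterpolation (hγ : ∀ y z, IsGeodesicSegment (γ y z) y z)
    {N : ℕ} {L : ℝ≥0} (hL : ∀ i < N, dist (x i) (x (i + 1)) ≤ L) :
    LipschitzOnWith L (geodesicInterpolation γ x N) (Icc 0 (N : ℝ)) := by
  suffices ∀ n ≤ N, LipschitzOnWith L (geodesicInterpolation γ x N) (Icc 0 (n : ℝ)) from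
    this N le_rfl
  intro n hn
  induction n with
  | zero =>
    refine LipschitzOnWith.of_dist_le_mul fun u hu v hv => ?_
    simp_all
  | succ n ih =>
    push_cast
    refine (ih (by omega)).Icc_union_Icc (LipschitzOnWith.of_dist_le_mul fun u hu v hv => ?_)
    rw [dist_geodesicInterpolation x hγ hn hu hv, Real.dist_eq, mul_comm (L : ℝ)]
    exact mul_le_mul_of_nonneg_left (hL n hn) (abs_nonneg _)

end GeodesicInterpolation

section QuasiGeodesic

variable {X : Type*} [MetricSpace X] {lam eps a b : ℝ} {σ f : ℝ → X}

theorem IsQuasiGeodesicOn.abs_sub_le (hσ : IsQuasiGeodesicOn lam eps a b σ) (hlam : 0 < lam)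
    {s t : ℝ} (hs : s ∈ Icc a b) (ht : t ∈ Icc a b) :
    |s - t| ≤ lam * (dist (σ s) (σ t) + eps) :=
  calc |s - t| = lam * (1 / lam * |s - t|) := by field_simp
    _ ≤ lam * (dist (σ s) (σ t) + eps) := by gcongr; linarith [(hσ s hs t ht).1]

theorem IsQuasiGeodesicOn.of_forall_near (hσ : IsQuasiGeodesicOn lam eps a b σ) (hlam : 1 ≤ lam)
    {c r : ℝ} (hnear : ∀ t ∈ Icc a b, ∃ s ∈ Icc a b, |t - s| ≤ c ∧ dist (f t) (σ s) ≤ r) :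
    IsQuasiGeodesicOn lam (eps + 2 * r + 2 * lam * c) a b f := by
  intro t₁ ht₁ t₂ ht₂
  obtain ⟨s₁, hs₁, hts₁, hd₁⟩ := hnear t₁ ht₁
  obtain ⟨s₂, hs₂, hts₂, hd₂⟩ := hnear t₂ ht₂
  obtain ⟨hlow, hup⟩ := hσ s₁ hs₁ s₂ hs₂
  have hc : 0 ≤ c := (abs_nonneg _).trans hts₁
  have hs : |s₁ - s₂| ≤ |t₁ - t₂| + 2 * c := by
    rw [abs_le] at *
    constructor <;> linarith [le_abs_self (t₁ - t₂), neg_abs_le (t₁ - t₂)]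
  have ht : |t₁ - t₂| ≤ |s₁ - s₂| + 2 * c := by
    rw [abs_le] at *
    constructor <;> linarith [le_abs_self (s₁ - s₂), neg_abs_le (s₁ - s₂)]
  have hfσ : dist (f t₁) (f t₂) ≤ dist (σ s₁) (σ s₂) + 2 * r := by
    linarith [dist_triangle4 (f t₁) (σ s₁) (σ s₂) (f t₂), dist_comm (f t₂) (σ s₂)]
  have hσf : dist (σ s₁) (σ s₂) ≤ dist (f t₁) (f t₂) + 2 * r := by
    linarith [dist_triangle4 (σ s₁) (f t₁) (f t₂) (σ s₂), dist_comm (f t₁) (σ s₁)]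
  have hinv : 1 / lam ≤ lam := ((div_le_one (by linarith)).2 hlam).trans hlam
  constructor
  · nlinarith [mul_le_mul_of_nonneg_left ht (by positivity : 0 ≤ 1 / lam),
      mul_le_mul_of_nonneg_right hinv hc]
  · nlinarith [mul_le_mul_of_nonneg_left hs (by linarith : 0 ≤ lam)]

theorem hausdorffDist_image_le_of_forall_near
    (hσ : ∀ s ∈ Icc a b, ∀ t ∈ Icc a b, dist (σ s) (σ t) ≤ lam * |s - t| + eps) (hlam : 0 ≤ lam)
    {c r R : ℝ}
    (hnear : ∀ t ∈ Icc a b, ∃ s ∈ Icc a b, |t - s| ≤ c ∧ f s = σ s ∧ dist (f t) (σ s) ≤ r)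
    (hR : 0 ≤ R) (hrR : r ≤ R) (hcR : lam * c + eps ≤ R) :
    hausdorffDist (σ '' Icc a b) (f '' Icc a b) ≤ R := by
  refine hausdorffDist_le_of_mem_dist hR ?_ ?_
  · rintro _ ⟨t, ht, rfl⟩
    obtain ⟨s, hs, hts, hfs, -⟩ := hnear t ht
    refine ⟨f s, mem_image_of_mem f hs, ?_⟩
    rw [hfs]
    calc dist (σ t) (σ s) ≤ lam * |t - s| + eps := hσ t ht s hs
      _ ≤ R := by nlinarith
  · rintro _ ⟨t, ht, rfl⟩
    obtain ⟨s, hs, -, -, hd⟩ := hnear t ht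
    exact ⟨σ s, mem_image_of_mem σ hs, hd.trans hrR⟩

theorem exists_tamed_path_of_lt (hX : GeodesicSpace X)
    (hσ : ∀ s ∈ Icc a b, ∀ t ∈ Icc a b, dist (σ s) (σ t) ≤ lam * |s - t| + eps)
    (hlam : 0 ≤ lam) (heps : 0 ≤ eps) (hab : a < b) :
    ∃ f : ℝ → X, ContinuousOn f (Icc a b) ∧ f a = σ a ∧ f b = σ b ∧
      (∀ t ∈ Icc a b, ∃ s ∈ Icc a b,
        |t - s| ≤ 1 / 2 ∧ f s = σ s ∧ dist (f t) (σ s) ≤ (lam + eps) / 2) ∧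
      ∀ s ∈ Icc a b, ∀ t ∈ Icc a b, s ≤ t →
        eVariationOn f (Icc s t) ≤ ENNReal.ofReal ((lam + eps) * (t - s) + eps) := by
  choose γ hγ using hX
  set N := ⌈b - a⌉₊
  have hN : 0 < N := Nat.ceil_pos.2 (sub_pos.2 hab)
  set δ := (b - a) / N
  have hδ : 0 < δ := div_pos (sub_pos.2 hab) (Nat.cast_pos.2 hN)
  have hδ1 : δ ≤ 1 := div_le_one_of_le₀ (Nat.le_ceil _) (Nat.cast_nonneg _)
  have hNδ : N * δ = b - a := mul_div_cancel₀ _ (Nat.cast_ne_zero.2 hN.ne')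
  have hgrid : ∀ k ≤ N, a + k * δ ∈ Icc a b := fun k hk =>
    ⟨by nlinarith [k.cast_nonneg (α := ℝ)], by nlinarith [(Nat.cast_le (α := ℝ)).2 hk]⟩
  set x : ℕ → X := fun k => σ (a + k * δ)
  set L : ℝ≥0 := ⟨lam * δ + eps, by positivity⟩
  have hL : (L : ℝ) = lam * δ + eps := rfl
  have hstep : ∀ i < N, dist (x i) (x (i + 1)) ≤ L := by
    intro i hi
    have := hσ _ (hgrid i hi.le) _ (hgrid (i + 1) hi)
    rw [hL]
    rwa [show a + i * δ - (a + (i + 1 : ℕ) * δ) = -δ by push_cast; ring, abs_neg,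
      abs_of_pos hδ] at this
  set φ : ℝ → ℝ := fun t => (t - a) / δ
  have hφ : MapsTo φ (Icc a b) (Icc 0 N) := fun t ht =>
    ⟨div_nonneg (by linarith [ht.1]) hδ.le, (div_le_iff₀ hδ).2 (by linarith [ht.2])⟩
  have hF : ∀ k ≤ N, geodesicInterpolation γ x N (φ (a + k * δ)) = σ (a + k * δ) := fun k hk => by
    rw [show φ (a + k * δ) = k by simp [φ, hδ.ne'], geodesicInterpolation_natCast x hγ hk]
  have hLip := lipschitzOnWith_geodesicInterpolation x hγ hstep
  refine ⟨geodesicInterpolation γ x N ∘ φ, hLip.continuousOn.comp (by fun_prop) hφ,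
    by simpa using hF 0 N.zero_le, by simpa [hNδ] using hF N le_rfl,
    fun t ht => ?_, fun s hs t ht hst => ?_⟩
  · obtain ⟨j, hj, hφj, hd⟩ := exists_dist_geodesicInterpolation_le x hγ hN hstep (hφ ht)
    refine ⟨a + j * δ, hgrid j hj, ?_, hF j hj, ?_⟩
    · rw [show t - (a + j * δ) = δ * (φ t - j) by simp [φ]; field_simp; ring, abs_mul,
        abs_of_pos hδ]
      nlinarith
    · calc dist (geodesicInterpolation γ x N (φ t)) (x j) ≤ L / 2 := hd
        _ ≤ (lam + eps) / 2 := by rw [hL]; nlinarith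
  · have hq : (t - s) / δ ≤ (t - s) + 1 :=
      div_div_natCeil_le_add_one (sub_pos.2 hab) (sub_nonneg.2 hst) (by linarith [hs.1, ht.2])
    refine (hLip.eVariationOn_comp_div_le hδ (hφ.mono_left (Icc_subset_Icc hs.1 ht.2))).trans
      (ENNReal.ofReal_le_ofReal ?_)
    rw [hL, add_mul, mul_assoc, mul_div_cancel₀ _ hδ.ne']
    nlinarith

theorem exists_tamed_path (hX : GeodesicSpace X)
    (hσ : ∀ s ∈ Icc a b, ∀ t ∈ Icc a b, dist (σ s) (σ t) ≤ lam * |s - t| + eps)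
    (hlam : 0 ≤ lam) (heps : 0 ≤ eps) (hab : a ≤ b) :
    ∃ f : ℝ → X, ContinuousOn f (Icc a b) ∧ f a = σ a ∧ f b = σ b ∧
      (∀ t ∈ Icc a b, ∃ s ∈ Icc a b,
        |t - s| ≤ 1 / 2 ∧ f s = σ s ∧ dist (f t) (σ s) ≤ (lam + eps) / 2) ∧
      ∀ s ∈ Icc a b, ∀ t ∈ Icc a b, s ≤ t →
        eVariationOn f (Icc s t) ≤ ENNReal.ofReal ((lam + eps) * (t - s) + eps) := by
  rcases hab.eq_or_lt with rfl | hab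
  · refine ⟨σ, by simp, rfl, rfl, fun t ht => ⟨t, ht, by simp, rfl, by simp; positivity⟩,
      fun s hs t ht _ => ?_⟩
    rw [eVariationOn.subsingleton σ ((Icc_self a ▸ subsingleton_singleton).anti
      (Icc_subset_Icc hs.1 ht.2))]
    exact zero_le
  · exact exists_tamed_path_of_lt hX hσ hlam heps hab

end QuasiGeodesic

/-- Taming quasi-geodesics (Bridson–Haefliger III.H.1.11): any `(λ,ε)`-quasi-geodesic in a
geodesic space can be replaced by a continuous `(λ, ε')`-quasi-geodesic `σ'` with
`ε' = 2(λ+ε)`, with the same endpoints, whose length on any subinterval is bounded by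
`k₁·d(σ'(s),σ'(t)) + k₂` with `k₁ = λ(λ+ε)` and `k₂ = (λε'+3)(λ+ε)`, and such that the
Hausdorff distance between the images of `σ` and `σ'` is at most `λ+ε`. -/
theorem taming_quasi_geodesics {X : Type*} [MetricSpace X] (hX : GeodesicSpace X)
    (lam eps a b : ℝ) (hlam : 1 ≤ lam) (heps : 0 ≤ eps) (hab : a ≤ b)
    (σ : ℝ → X) (hσ : IsQuasiGeodesicOn lam eps a b σ) :
    ∃ σ' : ℝ → X,
      ContinuousOn σ' (Set.Icc a b) ∧
      IsQuasiGeodesicOn lam (2 * (lam + eps)) a b σ' ∧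
      σ' a = σ a ∧ σ' b = σ b ∧
      (∀ s ∈ Set.Icc a b, ∀ t ∈ Set.Icc a b, s ≤ t →
        eVariationOn σ' (Set.Icc s t) ≤
          ENNReal.ofReal (lam * (lam + eps) * dist (σ' s) (σ' t) +
            (lam * (2 * (lam + eps)) + 3) * (lam + eps))) ∧
      Metric.hausdorffDist (σ '' Set.Icc a b) (σ' '' Set.Icc a b) ≤ lam + eps := by
  have hlam0 : 0 < lam := by linarith
  have hσ_upper := fun s hs t ht => (hσ s hs t ht).2
  obtain ⟨f, hcont, hfa, hfb, hnear, hvar⟩ := exists_tamed_path hX hσ_upper hlam0.le heps hab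
  have hf : IsQuasiGeodesicOn lam (2 * (lam + eps)) a b f := by
    convert hσ.of_forall_near hlam fun t ht =>
      (hnear t ht).imp fun s ⟨hs, hts, _, hd⟩ => ⟨hs, hts, hd⟩ using 1
    ring
  refine ⟨f, hcont, hf, hfa, hfb, fun s hs t ht hst => (hvar s hs t ht hst).trans
    (ENNReal.ofReal_le_ofReal ?_), hausdorffDist_image_le_of_forall_near hσ_upper hlam0.le hnear
      (by positivity) (by linarith) (by linarith)⟩
  have hts := hf.abs_sub_le hlam0 hs ht
  rw [abs_sub_comm, abs_of_nonneg (sub_nonneg.2 hst)] at hts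
  nlinarith [mul_le_mul_of_nonneg_left hts (by positivity : 0 ≤ lam + eps)]
end
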